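/- arXiv:2103.06224 — 2 statements merged into one kernel-verified Lean document; each statement's English description precedes it below -/
import Mathlib

section
/- (Proposition 1.) Fix h ∈ {1,…,H}, assume the discount factor γ ≠ 0, and let Z = Σ_{h'=1}^{H} γ^{h'-1} R_{h'} be the (discounted) trajectory return. Assume further that R_h is conditionally independent of the future trajectory (τ_{h+1}, …, τ_H) given the past trajectory τ^{h-1} = (τ_1, …, τ_{h-1}). Then the conditional mutual information between the return and the step-h state-action pair, given the rest of the trajectory, equals the conditional entropy of the step-h reward given the past: I(Z; τ_h | τ^{-h}) = H(R_h | τ^{h-1}). -/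
open MeasureTheory

/-- Shannon entropy of a random variable `X` (taking finitely many values)
defined on a probability space `(Ω, μ)`. -/
noncomputable def entropy {Ω : Type*} [MeasurableSpace Ω] (μ : Measure Ω)
    {S : Type*} (X : Ω → S) : ℝ :=
  -∑' x : S, ((μ (X ⁻¹' {x})).toReal * Real.log (μ (X ⁻¹' {x})).toReal)

/-- Conditional entropy `H(X | Y) = H(X, Y) - H(Y)`. -/
noncomputable def condEntropy {Ω : Type*} [MeasurableSpace Ω] (μ : Measure Ω)
    {S T : Type*} (X : Ω → S) (Y : Ω → T) : ℝ :=
  entropy μ (fun ω => (X ω, Y ω)) - entropy μ Y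

/-- Mutual information `I(X ; Y) = H(X) + H(Y) - H(X, Y)`. -/
noncomputable def mutualInfo {Ω : Type*} [MeasurableSpace Ω] (μ : Measure Ω)
    {S T : Type*} (X : Ω → S) (Y : Ω → T) : ℝ :=
  entropy μ X + entropy μ Y - entropy μ (fun ω => (X ω, Y ω))

/-- Conditional mutual information `I(X ; Y | Z) = H(X | Z) - H(X | (Y, Z))`. -/
noncomputable def condMutualInfo {Ω : Type*} [MeasurableSpace Ω] (μ : Measure Ω)
    {S T U : Type*} (X : Ω → S) (Y : Ω → T) (Z : Ω → U) : ℝ :=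
  condEntropy μ X Z - condEntropy μ X (fun ω => (Y ω, Z ω))

/-- The past trajectory `τ^{h-1} = (τ_1, …, τ_{h-1})` (0-based: entries with index `< h`). -/
def pastTraj {Ω X : Type*} {H : ℕ} (τ : Fin H → Ω → X) (h : Fin H) :
    Ω → ({i : Fin H // i < h} → X) :=
  fun ω i => τ i ω

/-- The future trajectory `(τ_{h+1}, …, τ_H)` (0-based: entries with index `> h`). -/
def futureTraj {Ω X : Type*} {H : ℕ} (τ : Fin H → Ω → X) (h : Fin H) :
    Ω → ({i : Fin H // h < i} → X) :=
  fun ω i => τ i ω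

/-- The trajectory with step `h` removed, `τ^{-h}`. -/
def delTraj {Ω X : Type*} {H : ℕ} (τ : Fin H → Ω → X) (h : Fin H) :
    Ω → ({i : Fin H // i ≠ h} → X) :=
  fun ω i => τ i ω

section Helpers

variable {Ω : Type*} [MeasurableSpace Ω] (μ : Measure Ω)

/-- entropy is invariant under post-composition with an injection. -/
lemma entropy_comp_inj {α β : Type*} (W : Ω → α) (g : α → β) (hg : Function.Injective g) :
    entropy μ (fun ω => g (W ω)) = entropy μ W := by
  unfold entropy
  congr 1
  refine (hg.tsum_eq ?_).symm.trans ?_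
  · intro b hb
    by_contra hne
    apply hb
    have hemp : (fun ω => g (W ω)) ⁻¹' {b} = ∅ := by
      ext ω
      simp only [Set.mem_preimage, Set.mem_singleton_iff, Set.mem_empty_iff_false, iff_false]
      intro hgW; exact hne ⟨W ω, hgW⟩
    simp [hemp]
  · apply tsum_congr
    intro a
    have : (fun ω => g (W ω)) ⁻¹' {g a} = W ⁻¹' {a} := by
      ext ω; simp [hg.eq_iff]
    rw [this]

lemma condEntropy_comp {α β : Type*} (W : Ω → α) (f : α → β) :
    condEntropy μ (fun ω => f (W ω)) W = 0 := by
  unfold condEntropy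
  have : (fun ω => (f (W ω), W ω)) = (fun ω => (fun a => (f a, a)) (W ω)) := rfl
  rw [this, entropy_comp_inj μ W (fun a => (f a, a))
    (fun a b hab => congrArg Prod.snd hab)]
  ring

lemma condEntropy_comp' {α β : Type*} (W : Ω → α) (f : α → β) (Z : Ω → β)
    (hZ : ∀ ω, Z ω = f (W ω)) : condEntropy μ Z W = 0 := by
  have : Z = fun ω => f (W ω) := funext hZ
  rw [this]
  exact condEntropy_comp μ W f

lemma entropy_comp_inj' {α β : Type*} (W : Ω → α) (g : α → β) (hg : Function.Injective g)
    (V : Ω → β) (hV : ∀ ω, V ω = g (W ω)) : entropy μ V = entropy μ W := by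
  have : V = fun ω => g (W ω) := funext hV
  rw [this]
  exact entropy_comp_inj μ W g hg

lemma entropy_eq_sum {α : Type*} (W : Ω → α) (u : Finset α) (hu : ∀ ω, W ω ∈ u) :
    entropy μ W = -∑ b ∈ u, ((μ (W ⁻¹' {b})).toReal * Real.log (μ (W ⁻¹' {b})).toReal) := by
  unfold entropy
  congr 1
  apply tsum_eq_sum
  intro b hb
  have : W ⁻¹' {b} = ∅ := by
    ext ω; simp only [Set.mem_preimage, Set.mem_singleton_iff, Set.mem_empty_iff_false,
      iff_false]
    intro he; exact hb (he ▸ hu ω)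
  simp [this]

lemma meas_partition {α : Type*} [MeasurableSpace α] [MeasurableSingletonClass α]
    (V : Ω → α) (hV : Measurable V) (s : Finset α) (hs : ∀ ω, V ω ∈ s)
    (U : Set Ω) (hU : MeasurableSet U) :
    μ U = ∑ x ∈ s, μ (V ⁻¹' {x} ∩ U) := by
  have hUeq : U = ⋃ x ∈ s, (V ⁻¹' {x} ∩ U) := by
    ext ω
    simp only [Set.mem_iUnion, Set.mem_inter_iff, Set.mem_preimage, Set.mem_singleton_iff]
    constructor
    · intro hω; exact ⟨V ω, hs ω, rfl, hω⟩
    · rintro ⟨x, _, _, hω⟩; exact hω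
  conv_lhs => rw [hUeq]
  refine measure_biUnion_finset ?_ ?_
  · intro x _ y _ hxy
    refine Set.disjoint_left.2 ?_
    rintro ω ⟨hx, -⟩ ⟨hy, -⟩
    exact hxy (hx.symm.trans hy)
  · intro x _
    exact ((hV (measurableSet_singleton x)).inter hU)

end Helpers

section CI

variable {Ω : Type*} [MeasurableSpace Ω] (μ : Measure Ω) [IsProbabilityMeasure μ]

lemma condEntropy_ci {B C : Type*} [Fintype B] [Fintype C]
    [MeasurableSpace B] [MeasurableSpace C]
    [MeasurableSingletonClass B] [MeasurableSingletonClass C]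
    (A : Ω → ℝ) (hA : Measurable A) (s : Finset ℝ) (hs : ∀ ω, A ω ∈ s)
    (F : Ω → B) (hF : Measurable F) (T : Ω → C) (hT : Measurable T)
    (hCI : ∀ x y t, μ (T ⁻¹' {t}) * μ (A ⁻¹' {x} ∩ F ⁻¹' {y} ∩ T ⁻¹' {t})
      = μ (A ⁻¹' {x} ∩ T ⁻¹' {t}) * μ (F ⁻¹' {y} ∩ T ⁻¹' {t})) :
    condEntropy μ A (fun ω => (F ω, T ω)) = condEntropy μ A T := by
  classical
  -- real-valued probabilities
  set q3 : ℝ → B → C → ℝ := fun x y t => (μ (A ⁻¹' {x} ∩ F ⁻¹' {y} ∩ T ⁻¹' {t})).toReal with hq3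
  set qAT : ℝ → C → ℝ := fun x t => (μ (A ⁻¹' {x} ∩ T ⁻¹' {t})).toReal with hqAT
  set qFT : B → C → ℝ := fun y t => (μ (F ⁻¹' {y} ∩ T ⁻¹' {t})).toReal with hqFT
  set qT : C → ℝ := fun t => (μ (T ⁻¹' {t})).toReal with hqT
  -- preimage identifications
  have pre3 : ∀ x y t, (fun ω => (A ω, (F ω, T ω))) ⁻¹' {(x, (y, t))}
      = A ⁻¹' {x} ∩ F ⁻¹' {y} ∩ T ⁻¹' {t} := by
    intro x y t; ext ω
    simp [Prod.ext_iff, and_assoc]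
  have preAT : ∀ x t, (fun ω => (A ω, T ω)) ⁻¹' {(x, t)} = A ⁻¹' {x} ∩ T ⁻¹' {t} := by
    intro x t; ext ω; simp [Prod.ext_iff]
  have preFT : ∀ y t, (fun ω => (F ω, T ω)) ⁻¹' {(y, t)} = F ⁻¹' {y} ∩ T ⁻¹' {t} := by
    intro y t; ext ω; simp [Prod.ext_iff]
  -- entropies as finite sums
  have e3 : entropy μ (fun ω => (A ω, (F ω, T ω)))
      = -∑ x ∈ s, ∑ y : B, ∑ t : C, (q3 x y t * Real.log (q3 x y t)) := by
    rw [entropy_eq_sum μ _ (s ×ˢ (Finset.univ : Finset (B × C))) (fun ω => by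
      simp [Finset.mem_product, hs ω])]
    rw [Finset.sum_product]
    congr 1
    refine Finset.sum_congr rfl fun x _ => ?_
    rw [← Finset.sum_product']
    refine Finset.sum_congr rfl fun p _ => ?_
    rw [pre3 x p.1 p.2]
  have eFT : entropy μ (fun ω => (F ω, T ω))
      = -∑ y : B, ∑ t : C, (qFT y t * Real.log (qFT y t)) := by
    rw [entropy_eq_sum μ _ (Finset.univ : Finset (B × C)) (fun ω => Finset.mem_univ _)]
    rw [← Finset.sum_product']
    congr 1
    refine Finset.sum_congr rfl fun p _ => ?_
    rw [preFT p.1 p.2]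
  have eAT : entropy μ (fun ω => (A ω, T ω))
      = -∑ x ∈ s, ∑ t : C, (qAT x t * Real.log (qAT x t)) := by
    rw [entropy_eq_sum μ _ (s ×ˢ (Finset.univ : Finset C)) (fun ω => by
      simp [Finset.mem_product, hs ω])]
    rw [Finset.sum_product]
    congr 1
    refine Finset.sum_congr rfl fun x _ => Finset.sum_congr rfl fun t _ => ?_
    rw [preAT x t]
  have eT : entropy μ T = -∑ t : C, (qT t * Real.log (qT t)) := by
    rw [entropy_eq_sum μ _ (Finset.univ : Finset C) (fun ω => Finset.mem_univ _)]
  -- marginal identities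
  have mFT : ∀ y t, qFT y t = ∑ x ∈ s, q3 x y t := by
    intro y t
    have := meas_partition μ A hA s hs (F ⁻¹' {y} ∩ T ⁻¹' {t})
      ((hF (measurableSet_singleton y)).inter (hT (measurableSet_singleton t)))
    rw [hqFT]
    simp only
    rw [this, ENNReal.toReal_sum (fun x _ => measure_ne_top μ _)]
    refine Finset.sum_congr rfl fun x _ => ?_
    rw [hq3]; simp only
    congr 2
    rw [Set.inter_assoc]
  have mAT : ∀ x t, qAT x t = ∑ y : B, q3 x y t := by
    intro x t
    have := meas_partition μ F hF Finset.univ (fun ω => Finset.mem_univ _)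
      (A ⁻¹' {x} ∩ T ⁻¹' {t})
      ((hA (measurableSet_singleton x)).inter (hT (measurableSet_singleton t)))
    rw [hqAT]
    simp only
    rw [this, ENNReal.toReal_sum (fun y _ => measure_ne_top μ _)]
    refine Finset.sum_congr rfl fun y _ => ?_
    rw [hq3]; simp only
    congr 2
    ext ω
    simp only [Set.mem_inter_iff, Set.mem_preimage, Set.mem_singleton_iff]
    tauto
  have mT : ∀ t, qT t = ∑ x ∈ s, ∑ y : B, q3 x y t := by
    intro t
    have h1 := meas_partition μ A hA s hs (T ⁻¹' {t}) (hT (measurableSet_singleton t))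
    rw [hqT]; simp only
    rw [h1, ENNReal.toReal_sum (fun x _ => measure_ne_top μ _)]
    refine Finset.sum_congr rfl fun x _ => ?_
    have h2 := meas_partition μ F hF Finset.univ (fun ω => Finset.mem_univ _)
      (A ⁻¹' {x} ∩ T ⁻¹' {t})
      ((hA (measurableSet_singleton x)).inter (hT (measurableSet_singleton t)))
    rw [h2, ENNReal.toReal_sum (fun y _ => measure_ne_top μ _)]
    refine Finset.sum_congr rfl fun y _ => ?_
    rw [hq3]; simp only
    congr 2
    ext ω
    simp only [Set.mem_inter_iff, Set.mem_preimage, Set.mem_singleton_iff]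
    tauto
  -- pointwise key identity
  have key : ∀ x ∈ s, ∀ (y : B) (t : C),
      q3 x y t * Real.log (q3 x y t) + q3 x y t * Real.log (qT t)
        = q3 x y t * Real.log (qFT y t) + q3 x y t * Real.log (qAT x t) := by
    intro x _ y t
    by_cases h0 : q3 x y t = 0
    · rw [h0]; ring
    · have hμ3 : μ (A ⁻¹' {x} ∩ F ⁻¹' {y} ∩ T ⁻¹' {t}) ≠ 0 := by
        intro hc; apply h0; rw [hq3]; simp [hc]
      have hq3pos : 0 < q3 x y t :=
        ENNReal.toReal_pos hμ3 (measure_ne_top μ _)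
      have hle1 : q3 x y t ≤ qFT y t :=
        ENNReal.toReal_mono (measure_ne_top μ _)
          (measure_mono (fun ω hω => ⟨hω.1.2, hω.2⟩))
      have hle2 : q3 x y t ≤ qAT x t :=
        ENNReal.toReal_mono (measure_ne_top μ _)
          (measure_mono (fun ω hω => ⟨hω.1.1, hω.2⟩))
      have hle3 : q3 x y t ≤ qT t :=
        ENNReal.toReal_mono (measure_ne_top μ _) (measure_mono (fun ω hω => hω.2))
      have hFTpos : 0 < qFT y t := lt_of_lt_of_le hq3pos hle1
      have hATpos : 0 < qAT x t := lt_of_lt_of_le hq3pos hle2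
      have hTpos : 0 < qT t := lt_of_lt_of_le hq3pos hle3
      have hprod : qT t * q3 x y t = qAT x t * qFT y t := by
        have := hCI x y t
        have := congrArg ENNReal.toReal this
        rwa [ENNReal.toReal_mul, ENNReal.toReal_mul] at this
      have hlog : Real.log (qT t) + Real.log (q3 x y t)
          = Real.log (qAT x t) + Real.log (qFT y t) := by
        rw [← Real.log_mul (ne_of_gt hTpos) (ne_of_gt hq3pos),
          ← Real.log_mul (ne_of_gt hATpos) (ne_of_gt hFTpos), hprod]
      nlinarith [hlog]
  -- sum the key identity
  have keySum : ∑ x ∈ s, ∑ y : B, ∑ t : C,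
        (q3 x y t * Real.log (q3 x y t) + q3 x y t * Real.log (qT t))
      = ∑ x ∈ s, ∑ y : B, ∑ t : C,
        (q3 x y t * Real.log (qFT y t) + q3 x y t * Real.log (qAT x t)) := by
    refine Finset.sum_congr rfl fun x hx => Finset.sum_congr rfl fun y _ =>
      Finset.sum_congr rfl fun t _ => key x hx y t
  -- marginal sum identities
  have sFT : ∑ x ∈ s, ∑ y : B, ∑ t : C, q3 x y t * Real.log (qFT y t)
      = ∑ y : B, ∑ t : C, qFT y t * Real.log (qFT y t) := by
    rw [Finset.sum_comm]
    refine Finset.sum_congr rfl fun y _ => ?_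
    rw [Finset.sum_comm]
    refine Finset.sum_congr rfl fun t _ => ?_
    rw [← Finset.sum_mul, ← mFT]
  have sAT : ∑ x ∈ s, ∑ y : B, ∑ t : C, q3 x y t * Real.log (qAT x t)
      = ∑ x ∈ s, ∑ t : C, qAT x t * Real.log (qAT x t) := by
    refine Finset.sum_congr rfl fun x _ => ?_
    rw [Finset.sum_comm]
    refine Finset.sum_congr rfl fun t _ => ?_
    rw [← Finset.sum_mul, ← mAT]
  have sT : ∑ x ∈ s, ∑ y : B, ∑ t : C, q3 x y t * Real.log (qT t)
      = ∑ t : C, qT t * Real.log (qT t) := by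
    have : ∀ x ∈ s, ∑ y : B, ∑ t : C, q3 x y t * Real.log (qT t)
        = ∑ t : C, ∑ y : B, q3 x y t * Real.log (qT t) := fun x _ => Finset.sum_comm
    rw [Finset.sum_congr rfl this, Finset.sum_comm]
    refine Finset.sum_congr rfl fun t _ => ?_
    rw [mT t, Finset.sum_mul]
    refine Finset.sum_congr rfl fun x _ => ?_
    rw [Finset.sum_mul]
  -- conclude
  unfold condEntropy
  rw [e3, eFT, eAT, eT]
  have expand : ∑ x ∈ s, ∑ y : B, ∑ t : C,
        (q3 x y t * Real.log (q3 x y t) + q3 x y t * Real.log (qT t))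
      = (∑ x ∈ s, ∑ y : B, ∑ t : C, q3 x y t * Real.log (q3 x y t))
        + ∑ x ∈ s, ∑ y : B, ∑ t : C, q3 x y t * Real.log (qT t) := by
    simp [Finset.sum_add_distrib]
  have expand2 : ∑ x ∈ s, ∑ y : B, ∑ t : C,
        (q3 x y t * Real.log (qFT y t) + q3 x y t * Real.log (qAT x t))
      = (∑ x ∈ s, ∑ y : B, ∑ t : C, q3 x y t * Real.log (qFT y t))
        + ∑ x ∈ s, ∑ y : B, ∑ t : C, q3 x y t * Real.log (qAT x t) := by
    simp [Finset.sum_add_distrib]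
  rw [expand, expand2, sFT, sAT, sT] at keySum
  linarith [keySum]

end CI


/-- Proposition 1: with `Z = ∑_{h'} γ^{h'-1} R_{h'}`, `γ ≠ 0`, and `R_h`
conditionally independent of the future trajectory `(τ_{h+1}, …, τ_H)` given the past
trajectory `τ^{h-1}`, we have `I(Z; τ_h | τ^{-h}) = H(R_h | τ^{h-1})`. -/
theorem credit_assignment_prop1 {Ω : Type*} [MeasurableSpace Ω]
    (μ : Measure Ω) [IsProbabilityMeasure μ]
    {X : Type*} [Fintype X] [Nonempty X] [MeasurableSpace X] [MeasurableSingletonClass X]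
    (H : ℕ) (τ : Fin H → Ω → X) (hτ : ∀ i, Measurable (τ i))
    (r : Fin H → X → ℝ) (γ : ℝ) (hγ : γ ≠ 0) (h : Fin H)
    (hCI : ∀ (x : ℝ) (y : {i : Fin H // h < i} → X) (t : {i : Fin H // i < h} → X),
      μ (pastTraj τ h ⁻¹' {t}) *
          μ ((fun ω => r h (τ h ω)) ⁻¹' {x} ∩ futureTraj τ h ⁻¹' {y} ∩ pastTraj τ h ⁻¹' {t})
        = μ ((fun ω => r h (τ h ω)) ⁻¹' {x} ∩ pastTraj τ h ⁻¹' {t}) *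
          μ (futureTraj τ h ⁻¹' {y} ∩ pastTraj τ h ⁻¹' {t})) :
    condMutualInfo μ (fun ω => ∑ i : Fin H, γ ^ (i : ℕ) * r i (τ i ω)) (τ h) (delTraj τ h)
      = condEntropy μ (fun ω => r h (τ h ω)) (pastTraj τ h) := by
  classical
  set Rh : Ω → ℝ := fun ω => r h (τ h ω) with hRh
  -- the remainder function on the deleted trajectory
  set c : ({i : Fin H // i ≠ h} → X) → ℝ :=
    fun w => ∑ i : {i : Fin H // i ≠ h}, γ ^ ((i : Fin H) : ℕ) * r i (w i) with hc
  -- sum splitting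
  have hsplit : ∀ ω, (∑ i : Fin H, γ ^ (i : ℕ) * r i (τ i ω))
      = γ ^ (h : ℕ) * r h (τ h ω) + c (delTraj τ h ω) := by
    intro ω
    have h2 : ∑ i ∈ Finset.univ.erase h, γ ^ (i : ℕ) * r i (τ i ω)
        = ∑ i : {i : Fin H // i ≠ h}, γ ^ ((i : Fin H) : ℕ) * r (i : Fin H) (τ (i : Fin H) ω) :=
      Finset.sum_subtype _ (fun i => by simp) _
    rw [← Finset.add_sum_erase _ _ (Finset.mem_univ h), h2]
    rfl
  -- Step 1: H(Z | τ_h, τ^{-h}) = 0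
  have step1 : condEntropy μ (fun ω => ∑ i : Fin H, γ ^ (i : ℕ) * r i (τ i ω))
      (fun ω => (τ h ω, delTraj τ h ω)) = 0 := by
    exact condEntropy_comp' μ (fun ω => (τ h ω, delTraj τ h ω))
      (fun p : X × ({i : Fin H // i ≠ h} → X) => γ ^ (h : ℕ) * r h p.1 + c p.2)
      _ (fun ω => hsplit ω)
  -- Step 2: H(Z | τ^{-h}) = H(R_h | τ^{-h})
  have step2 : condEntropy μ (fun ω => ∑ i : Fin H, γ ^ (i : ℕ) * r i (τ i ω))
      (delTraj τ h) = condEntropy μ Rh (delTraj τ h) := by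
    unfold condEntropy
    congr 1
    refine entropy_comp_inj' μ (fun ω => (Rh ω, delTraj τ h ω))
      (fun p : ℝ × ({i : Fin H // i ≠ h} → X) => (γ ^ (h : ℕ) * p.1 + c p.2, p.2))
      ?_ _ (fun ω => Prod.ext (hsplit ω) rfl)
    intro p q hpq
    simp only [Prod.mk.injEq] at hpq
    obtain ⟨h1, h2⟩ := hpq
    rw [h2] at h1
    have h3 : γ ^ (h : ℕ) * p.1 = γ ^ (h : ℕ) * q.1 := by linarith
    exact Prod.ext (mul_left_cancel₀ (pow_ne_zero _ hγ) h3) h2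
  -- the bijection between deleted trajectories and (future, past) pairs
  set e : ({i : Fin H // i ≠ h} → X) →
      ({i : Fin H // h < i} → X) × ({i : Fin H // i < h} → X) :=
    fun w => (fun i => w ⟨i.1, ne_of_gt i.2⟩, fun i => w ⟨i.1, ne_of_lt i.2⟩) with he
  have heInj : Function.Injective e := by
    intro w w' hw
    funext i
    rcases lt_or_gt_of_ne i.2 with hlt | hgt
    · have h2 := congrFun (congrArg Prod.snd hw) ⟨i.1, hlt⟩
      exact h2
    · have h2 := congrFun (congrArg Prod.fst hw) ⟨i.1, hgt⟩
      exact h2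
  -- Step 3: relabel τ^{-h} as (future, past)
  have step3 : condEntropy μ Rh (delTraj τ h)
      = condEntropy μ Rh (fun ω => (futureTraj τ h ω, pastTraj τ h ω)) := by
    unfold condEntropy
    have hp1 : entropy μ (fun ω => (Rh ω, (futureTraj τ h ω, pastTraj τ h ω)))
        = entropy μ (fun ω => (Rh ω, delTraj τ h ω)) :=
      entropy_comp_inj' μ (fun ω => (Rh ω, delTraj τ h ω)) (Prod.map (id : ℝ → ℝ) e)
        (Function.Injective.prodMap Function.injective_id heInj) _ (fun ω => rfl)
    have hp2 : entropy μ (fun ω => (futureTraj τ h ω, pastTraj τ h ω))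
        = entropy μ (delTraj τ h) :=
      entropy_comp_inj' μ (delTraj τ h) e heInj _ (fun ω => rfl)
    rw [hp1, hp2]
  -- Step 4: conditional independence
  have step4 : condEntropy μ Rh (fun ω => (futureTraj τ h ω, pastTraj τ h ω))
      = condEntropy μ Rh (pastTraj τ h) := by
    refine condEntropy_ci μ Rh ((measurable_of_countable (r h)).comp (hτ h))
      (Finset.image (r h) Finset.univ)
      (fun ω => Finset.mem_image.2 ⟨τ h ω, Finset.mem_univ _, rfl⟩)
      (futureTraj τ h) (measurable_pi_lambda _ (fun i => hτ i.1))
      (pastTraj τ h) (measurable_pi_lambda _ (fun i => hτ i.1)) ?_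
    intro x y t
    exact hCI x y t
  unfold condMutualInfo
  rw [step1, step2, step3, step4]
  ring
end

section
/- (Proposition 3.) Define the per-step returns by Z_{H+1} = 0 and Z_h = R_h + γ Z_{h+1} for h = H, H-1, …, 1 (equivalently Z_h = Σ_{h'=h}^{H} γ^{h'-h} R_{h'}). Then the mutual information between the trajectory and the sequence of returns equals the directed information flowing from the trajectory process to the return process: I((τ_1, …, τ_H); (Z_1, …, Z_H)) = Σ_{h=1}^{H} I(Z_h; (τ_1, …, τ_h) | (Z_{h+1}, …, Z_H)), where for h = H the conditioning tuple (Z_{H+1}, …, Z_H) is empty and the summand is the unconditional mutual information I(Z_H; (τ_1, …, τ_H)). -/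
open MeasureTheory

/-- Entropy is invariant under injective post-composition. -/
lemma entropy_comp_injective {Ω : Type*} [MeasurableSpace Ω] (μ : Measure Ω)
    {S T : Type*} (Y : Ω → S) (g : S → T) (hg : Function.Injective g) :
    entropy μ (fun ω => g (Y ω)) = entropy μ Y := by
  unfold entropy
  congr 1
  rw [← Function.Injective.tsum_eq hg]
  · refine tsum_congr fun y => ?_
    have hpre : (fun ω => g (Y ω)) ⁻¹' {g y} = Y ⁻¹' {y} := by
      ext ω; simp [hg.eq_iff]
    rw [hpre]
  · intro x hx
    by_contra hxr
    apply hx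
    have hpre : (fun ω => g (Y ω)) ⁻¹' {x} = ∅ := by
      ext ω
      simp only [Set.mem_preimage, Set.mem_singleton_iff, Set.mem_empty_iff_false, iff_false]
      exact fun hgx => hxr ⟨Y ω, hgx⟩
    simp only [hpre, measure_empty, ENNReal.toReal_zero, zero_mul]

/-- Conditional entropy vanishes when `X` is a deterministic function of `Y`. -/
lemma condEntropy_eq_zero_of_comp {Ω : Type*} [MeasurableSpace Ω] (μ : Measure Ω)
    {S T : Type*} (Xv : Ω → S) (Y : Ω → T) (f : T → S) (h : ∀ ω, Xv ω = f (Y ω)) :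
    condEntropy μ Xv Y = 0 := by
  have hinj : Function.Injective (fun t : T => (f t, t)) := fun a b hab =>
    congrArg Prod.snd hab
  have he : (fun ω => (Xv ω, Y ω)) = fun ω => (fun t : T => (f t, t)) (Y ω) := by
    funext ω; simp [h ω]
  unfold condEntropy
  rw [he, entropy_comp_injective μ Y _ hinj, sub_self]

/-- Entropy of a variable valued in a `Unique` type is zero. -/
lemma entropy_unique {Ω : Type*} [MeasurableSpace Ω] (μ : Measure Ω) [IsProbabilityMeasure μ]
    {T : Type*} [Unique T] (Y : Ω → T) : entropy μ Y = 0 := by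
  unfold entropy
  rw [tsum_eq_single default (fun b hb => absurd (Subsingleton.elim b default) hb)]
  have hpre : Y ⁻¹' {default} = Set.univ := by
    ext ω; simp [Unique.eq_default (Y ω)]
  rw [hpre]
  simp

/-- The return at time `k` as a deterministic function of the trajectory. -/
noncomputable def zfun {X : Type*} (H : ℕ) (r : Fin H → X → ℝ) (γ : ℝ) :
    ℕ → (Fin H → X) → ℝ := fun k =>
  if hk : k < H then fun t => r ⟨k, hk⟩ (t ⟨k, hk⟩) + γ * zfun H r γ (k + 1) t
  else fun _ => 0
  termination_by k => H - k
  decreasing_by omega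

/-- Proposition 3: with per-step returns defined by `Z_{H+1} = 0` and
`Z_h = R_h + γ Z_{h+1}`, the mutual information between the trajectory and the sequence
of returns equals the directed information from the trajectory process to the return
process (hindsight ordering):
`I((τ_1,…,τ_H); (Z_1,…,Z_H)) = ∑_{h=1}^H I(Z_h; (τ_1,…,τ_h) | (Z_{h+1},…,Z_H))`.
Indices are 0-based: step `h : Fin H` plays the role of step `h+1`, and the return
process is indexed by `ℕ` with `Z H = 0`. -/
theorem directed_information_decomposition {Ω : Type*} [MeasurableSpace Ω]
    (μ : Measure Ω) [IsProbabilityMeasure μ]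
    {X : Type*} [Fintype X] [Nonempty X] [MeasurableSpace X] [MeasurableSingletonClass X]
    (H : ℕ) (τ : Fin H → Ω → X) (hτ : ∀ i, Measurable (τ i))
    (r : Fin H → X → ℝ) (γ : ℝ)
    (Z : ℕ → Ω → ℝ)
    (hZtop : ∀ ω, Z H ω = 0)
    (hZrec : ∀ (h : Fin H) (ω : Ω), Z h ω = r h (τ h ω) + γ * Z ((h : ℕ) + 1) ω) :
    mutualInfo μ (fun ω => fun i : Fin H => τ i ω) (fun ω => fun i : Fin H => Z i ω)
      = ∑ h : Fin H,
          condMutualInfo μ (Z h)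
            (fun ω => fun i : {i : Fin H // i ≤ h} => τ i ω)
            (fun ω => fun i : {i : Fin H // h < i} => Z (i : Fin H) ω) := by
  classical
  set T : Ω → (Fin H → X) := fun ω i => τ i ω with hTdef
  -- Z factors through T
  have hZfac : ∀ n k, k + n = H → ∀ ω, Z k ω = zfun H r γ k (T ω) := by
    intro n
    induction n with
    | zero =>
      intro k hk ω
      have hk' : k = H := by omega
      rw [hk', hZtop ω, zfun, dif_neg (lt_irrefl H)]
    | succ n ih =>
      intro k hk ω
      have hkH : k < H := by omega
      rw [zfun, dif_pos hkH]
      have hr := hZrec ⟨k, hkH⟩ ω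
      simp only [Fin.val_mk] at hr
      rw [hr, ih (k + 1) (by omega) ω]
  have hZle : ∀ (k : ℕ), k ≤ H → ∀ ω, Z k ω = zfun H r γ k (T ω) :=
    fun k hk => hZfac (H - k) k (by omega)
  -- the tail-tuple entropies
  set A : ℕ → ℝ := fun k =>
    entropy μ (fun ω => fun i : {i : Fin H // k ≤ ((i : Fin H) : ℕ)} => Z ((i : Fin H) : ℕ) ω)
    with hAdef
  -- each summand equals A h - A (h+1)
  have hsummand : ∀ h : Fin H,
      condMutualInfo μ (Z h)
        (fun ω => fun i : {i : Fin H // i ≤ h} => τ i ω)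
        (fun ω => fun i : {i : Fin H // h < i} => Z (i : Fin H) ω)
      = A (h : ℕ) - A ((h : ℕ) + 1) := by
    intro h
    -- (a) Z h is a function of (τ_{≤h}, Z_{>h})
    have hzero : condEntropy μ (Z h)
        (fun ω => ((fun i : {i : Fin H // i ≤ h} => τ i ω),
                   (fun i : {i : Fin H // h < i} => Z (i : Fin H) ω))) = 0 := by
      refine condEntropy_eq_zero_of_comp μ _ _
        (fun p : ({i : Fin H // i ≤ h} → X) × ({i : Fin H // h < i} → ℝ) =>
          r h (p.1 ⟨h, le_refl h⟩) +
            γ * (if hk : (h : ℕ) + 1 < H then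
                    p.2 ⟨⟨(h : ℕ) + 1, hk⟩, Fin.lt_def.mpr (Nat.lt_succ_self _)⟩
                  else 0)) ?_
      intro ω
      rw [hZrec h ω]
      by_cases hk : (h : ℕ) + 1 < H
      · simp only [dif_pos hk]
      · have hEq : (h : ℕ) + 1 = H := by have := h.isLt; omega
        simp only [dif_neg hk]
        rw [hEq, hZtop ω]
    -- (b) entropy of (Z h, Z_{>h}) equals A h
    have hpair : entropy μ (fun ω => (Z h ω,
        (fun i : {i : Fin H // h < i} => Z (i : Fin H) ω))) = A (h : ℕ) := by
      have hψ : Function.Injective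
          (fun v : ({i : Fin H // (h : ℕ) ≤ ((i : Fin H) : ℕ)} → ℝ) =>
            (v ⟨h, le_refl _⟩,
             fun i : {i : Fin H // h < i} =>
               v ⟨(i : Fin H), (Fin.lt_def.mp i.2).le⟩)) := by
        intro v w e
        funext i
        rcases eq_or_lt_of_le i.2 with heq | hlt
        · have hi : i = ⟨h, le_refl _⟩ := Subtype.ext (Fin.val_injective heq.symm)
          rw [hi]
          exact congrArg Prod.fst e
        · exact congrFun (congrArg Prod.snd e) ⟨(i : Fin H), Fin.lt_def.mpr hlt⟩
      have := entropy_comp_injective μ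
        (fun ω => fun i : {i : Fin H // (h : ℕ) ≤ ((i : Fin H) : ℕ)} => Z ((i : Fin H) : ℕ) ω)
        _ hψ
      exact this
    -- (c) entropy of Z_{>h} equals A (h+1)
    have hB : entropy μ (fun ω => fun i : {i : Fin H // h < i} => Z (i : Fin H) ω)
        = A ((h : ℕ) + 1) := by
      have hφ : Function.Injective
          (fun v : ({i : Fin H // (h : ℕ) + 1 ≤ ((i : Fin H) : ℕ)} → ℝ) =>
            fun i : {i : Fin H // h < i} => v ⟨(i : Fin H), Fin.lt_def.mp i.2⟩) := by
        intro v w e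
        funext i
        exact congrFun e ⟨(i : Fin H), Fin.lt_def.mpr i.2⟩
      have := entropy_comp_injective μ
        (fun ω => fun i : {i : Fin H // (h : ℕ) + 1 ≤ ((i : Fin H) : ℕ)} =>
          Z ((i : Fin H) : ℕ) ω) _ hφ
      exact this
    unfold condMutualInfo
    rw [hzero, sub_zero]
    unfold condEntropy
    rw [hpair, hB]
  -- summing the summands telescopes
  have hRHS : ∑ h : Fin H,
      condMutualInfo μ (Z h)
        (fun ω => fun i : {i : Fin H // i ≤ h} => τ i ω)
        (fun ω => fun i : {i : Fin H // h < i} => Z (i : Fin H) ω)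
      = A 0 - A H := by
    calc ∑ h : Fin H, condMutualInfo μ (Z h)
            (fun ω => fun i : {i : Fin H // i ≤ h} => τ i ω)
            (fun ω => fun i : {i : Fin H // h < i} => Z (i : Fin H) ω)
        = ∑ h : Fin H, (A (h : ℕ) - A ((h : ℕ) + 1)) := by
          exact Finset.sum_congr rfl fun h _ => hsummand h
      _ = ∑ k ∈ Finset.range H, (A k - A (k + 1)) :=
          Fin.sum_univ_eq_sum_range (fun k => A k - A (k + 1)) H
      _ = A 0 - A H := Finset.sum_range_sub' A H
  -- the top entropy vanishes
  have hAH : A H = 0 := by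
    haveI : IsEmpty {i : Fin H // H ≤ ((i : Fin H) : ℕ)} :=
      ⟨fun i => absurd i.2 (not_le.mpr i.1.isLt)⟩
    exact entropy_unique μ _
  -- the LHS equals A 0
  have hLHS : mutualInfo μ (fun ω => fun i : Fin H => τ i ω)
      (fun ω => fun i : Fin H => Z i ω) = A 0 := by
    have hg : Function.Injective
        (fun t : Fin H → X => (t, fun i : Fin H => zfun H r γ (i : ℕ) t)) :=
      fun a b hab => congrArg Prod.fst hab
    have hpairT : (fun ω => ((fun i : Fin H => τ i ω), (fun i : Fin H => Z i ω)))
        = fun ω => (fun t : Fin H → X => (t, fun i : Fin H => zfun H r γ (i : ℕ) t)) (T ω) := by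
      funext ω
      refine Prod.ext rfl ?_
      funext i
      exact hZle i (le_of_lt i.isLt) ω
    have hEntPair : entropy μ
        (fun ω => ((fun i : Fin H => τ i ω), (fun i : Fin H => Z i ω)))
        = entropy μ T := by
      rw [hpairT]
      exact entropy_comp_injective μ T _ hg
    have hZT : entropy μ (fun ω => fun i : Fin H => Z i ω) = A 0 := by
      have he : Function.Injective
          (fun v : ({i : Fin H // 0 ≤ ((i : Fin H) : ℕ)} → ℝ) =>
            fun i : Fin H => v ⟨i, Nat.zero_le _⟩) := by
        intro v w e
        funext i
        exact congrFun e (i : Fin H)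
      have := entropy_comp_injective μ
        (fun ω => fun i : {i : Fin H // 0 ≤ ((i : Fin H) : ℕ)} => Z ((i : Fin H) : ℕ) ω) _ he
      exact this
    unfold mutualInfo
    rw [hEntPair, hZT]
    have hT : entropy μ (fun ω => fun i : Fin H => τ i ω) = entropy μ T := rfl
    rw [hT]
    ring
  rw [hLHS, hRHS, hAH, sub_zero]
end
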